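/- If p is a positively folded alcove walk and the raising root operator ẽ_i applied to p is nonzero, then ẽ_i(p) is again positively folded and dim(ẽ_i(p)) = dim(p) + 1. Moreover end(ẽ_i(p)) equals t_{α_i^∨}·end(p), end(p), or s_γ·end(p) according to whether the operator acts by case (a), (b), or (c) of its definition. -/

import Mathlib

open scoped RealInnerProductSpace BigOperators

attribute [local instance] Classical.propDecidable

noncomputable section

variable {V : Type*} [NormedAddCommGroup V] [InnerProductSpace ℝ V]

/-- The coroot `α^∨ = 2α/⟨α,α⟩` of a root `α`. -/
def coroot' (α : V) : V := (2 / ⟪α, α⟫) • α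

/-- The reflection `s_α` in the linear hyperplane orthogonal to `α`. -/
def sref (α : V) : V → V := fun x => x - ⟪x, α⟫ • coroot' α

/-- Data of a reduced irreducible crystallographic root system `R` (recorded via its
positive system `Rpos` and simple roots `simple`) in a real inner product space. -/
structure RSData (V : Type*) [NormedAddCommGroup V] [InnerProductSpace ℝ V] (n : ℕ) where
  Rpos : Finset V
  simple : Fin n → V
  hsimple : ∀ i, simple i ∈ Rpos
  hnz : ∀ α ∈ Rpos, α ≠ 0
  hdisj : ∀ α ∈ Rpos, -α ∉ Rpos
  hind : LinearIndependent ℝ simple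
  hspan : Submodule.span ℝ (Set.range simple) = ⊤
  hposcomb : ∀ β ∈ Rpos, ∃ c : Fin n → ℕ, β = ∑ i, (c i : ℝ) • simple i
  hrefl : ∀ α ∈ Rpos, ∀ β ∈ Rpos, sref α β ∈ Rpos ∨ -(sref α β) ∈ Rpos
  hcrys : ∀ α ∈ Rpos, ∀ β ∈ Rpos, ∃ z : ℤ, ⟪β, coroot' α⟫ = (z : ℝ)
  hred : ∀ α ∈ Rpos, ∀ c : ℝ, c • α ∈ Rpos → c = 1
  hirr : ∀ S : Set V, (∀ α ∈ Rpos, ∀ β ∈ Rpos, α ∈ S → ⟪α, β⟫ ≠ 0 → β ∈ S) →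
      (∃ α ∈ Rpos, α ∈ S) → ∀ β ∈ Rpos, β ∈ S

/-- The finite Weyl group `W₀`, realized as the set of all compositions of the
reflections `s_α`, `α ∈ R`. -/
def W0Set (Rpos : Finset V) : Set (V → V) :=
  {w | ∃ l : List V, (∀ a ∈ l, a ∈ Rpos) ∧ w = l.foldr (fun a f => sref a ∘ f) id}

/-- Pairs `(α, k)` (with `α ∈ R⁺`) indexing affine hyperplanes
`H_{α+kδ} = {v | ⟪v,α⟫ + k = 0}` that are crossed positively when moving from `x` to `y`
(i.e. `x` lies on the negative side and `y` on the positive side). -/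
def sepPos (Rpos : Finset V) (x y : V) : Set (V × ℤ) :=
  {q | q.1 ∈ Rpos ∧ ⟪x, q.1⟫ + (q.2 : ℝ) < 0 ∧ 0 < ⟪y, q.1⟫ + (q.2 : ℝ)}

/-- The signed number of affine hyperplanes separating `x` from `y`:
positively crossed ones minus negatively crossed ones. -/
def signedLen (Rpos : Finset V) (x y : V) : ℤ :=
  (Nat.card (sepPos Rpos x y) : ℤ) - (Nat.card (sepPos Rpos y x) : ℤ)

/-- The total number of affine hyperplanes separating `x` from `y`. -/
def totalLen (Rpos : Finset V) (x y : V) : ℕ :=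
  Nat.card (sepPos Rpos x y) + Nat.card (sepPos Rpos y x)

/-- Labels for the generators `s_0, s_1, …, s_n` of the affine Weyl group:
`none` is the affine generator `s_0`, `some i` is the finite generator `s_i`. -/
def Gen (n : ℕ) := Option (Fin n)

/-- The affine reflection in the hyperplane `H_{α+kδ} = {x | ⟪x,α⟫ + k = 0}`. -/
def aref (α : V) (k : ℝ) : V → V := fun x => x - (⟪x, α⟫ + k) • coroot' α

/-- The root attached to a generator: `θ` (the highest root) for `s_0`,
and `α_i` for `s_i`. -/
def genRoot {n : ℕ} (D : RSData V n) (θ : V) : Gen n → V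
  | none => θ
  | some j => D.simple j

/-- The integer `k` with `s_i` the reflection in `H_{genRoot i + kδ}`:
`k = -1` for `s_0` and `k = 0` otherwise. -/
def genK {n : ℕ} : Gen n → ℤ
  | none => -1
  | some _ => 0

/-- The simple affine reflections `s_0, …, s_n`. -/
def sgen {n : ℕ} (D : RSData V n) (θ : V) (i : Gen n) : V → V :=
  aref (genRoot D θ i) ((genK i : ℤ) : ℝ)

/-- An alcove walk is encoded by its list of steps: each step records the generator
label (its type) and a Boolean, `true` for a crossing and `false` for a fold.
`walkMap` is the element of the (extended) affine Weyl group, realized as an affine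
transformation of `V`, representing the alcove reached at the end of the walk
started at the fundamental alcove `1`. -/
def walkMap {n : ℕ} (D : RSData V n) (θ : V) (steps : List (Gen n × Bool)) : V → V :=
  steps.foldl (fun g s => if s.2 = true then g ∘ sgen D θ s.1 else g) id

/-- The generator label of the `j`-th step. -/
def stepGen {n : ℕ} (steps : List (Gen n × Bool)) (j : ℕ) : Gen n :=
  (steps.getD j (none, true)).1

/-- Whether the `j`-th step is a crossing (rather than a fold). -/
def crossAt {n : ℕ} (steps : List (Gen n × Bool)) (j : ℕ) : Prop :=
  (steps.getD j (none, true)).2 = true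

/-- The direction vector of the wall met at the `j`-th step of the walk. -/
def wallDir {n : ℕ} (D : RSData V n) (θ : V) (steps : List (Gen n × Bool)) (j : ℕ) : V :=
  walkMap D θ (steps.take j) (genRoot D θ (stepGen steps j))
    - walkMap D θ (steps.take j) 0

/-- The positive root `β` such that the wall met at the `j`-th step is `H_{β+mδ}`. -/
def wallRoot {n : ℕ} (D : RSData V n) (θ : V) (steps : List (Gen n × Bool)) (j : ℕ) : V :=
  if wallDir D θ steps j ∈ D.Rpos then wallDir D θ steps j else -wallDir D θ steps j

/-- The constant `m` such that the wall met at the `j`-th step is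
`H_{β+mδ} = {x | ⟪x,β⟫ + m = 0}` with `β = wallRoot` positive. -/
def wallConst {n : ℕ} (D : RSData V n) (θ : V) (steps : List (Gen n × Bool)) (j : ℕ) : ℝ :=
  if wallDir D θ steps j ∈ D.Rpos then
    ((genK (stepGen steps j) : ℤ) : ℝ) - ⟪walkMap D θ (steps.take j) 0, wallDir D θ steps j⟫
  else
    ⟪walkMap D θ (steps.take j) 0, wallDir D θ steps j⟫ - ((genK (stepGen steps j) : ℤ) : ℝ)

/-- The position of the alcove occupied before the `j`-th step relative to the wall met
at the `j`-th step: negative means the alcove is on the negative side. -/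
def sideAt {n : ℕ} (D : RSData V n) (θ p₀ : V) (steps : List (Gen n × Bool)) (j : ℕ) : ℝ :=
  ⟪walkMap D θ (steps.take j) p₀, wallRoot D θ steps j⟫ + wallConst D θ steps j

/-- `ε⁺(p)`: the number of positive crossings. -/
def numPosCross {n : ℕ} (D : RSData V n) (θ p₀ : V) (steps : List (Gen n × Bool)) : ℕ :=
  ((Finset.range steps.length).filter fun j =>
    crossAt steps j ∧ sideAt D θ p₀ steps j < 0).card

/-- `ε⁻(p)`: the number of negative crossings. -/
def numNegCross {n : ℕ} (D : RSData V n) (θ p₀ : V) (steps : List (Gen n × Bool)) : ℕ :=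
  ((Finset.range steps.length).filter fun j =>
    crossAt steps j ∧ 0 < sideAt D θ p₀ steps j).card

/-- `f(p)`: the number of folds. -/
def numFolds {n : ℕ} (steps : List (Gen n × Bool)) : ℕ :=
  ((Finset.range steps.length).filter fun j => ¬ crossAt steps j).card

/-- A walk is positively folded when every fold leaves the walk on the positive side of
the wall on which it folds. -/
def PosFolded {n : ℕ} (D : RSData V n) (θ p₀ : V) (steps : List (Gen n × Bool)) : Prop :=
  ∀ j < steps.length, ¬ crossAt steps j → 0 < sideAt D θ p₀ steps j

/-- `dim(p) = ε⁺(p) + f(p)`. -/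
def walkDim {n : ℕ} (D : RSData V n) (θ p₀ : V) (steps : List (Gen n × Bool)) : ℕ :=
  numPosCross D θ p₀ steps + numFolds steps

/-- `ρ`, the half sum of the positive roots. -/
def halfSum {n : ℕ} (D : RSData V n) : V := (1 / 2 : ℝ) • ∑ α ∈ D.Rpos, α

/-- The length `ℓ(w)` of an element of the finite Weyl group `W₀`, computed as the number
of (automatically linear) hyperplanes separating the fundamental alcove from its image. -/
def finLen {n : ℕ} (D : RSData V n) (p₀ : V) (w : V → V) : ℕ :=
  Nat.card {α : V | α ∈ D.Rpos ∧ ⟪w p₀, α⟫ < 0}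

/-- The walk makes a negative crossing of the hyperplane `H_{α+kδ}` at position `j`. -/
def negCrossOn {n : ℕ} (D : RSData V n) (θ p₀ : V) (steps : List (Gen n × Bool))
    (α : V) (k : ℤ) (j : ℕ) : Prop :=
  j < steps.length ∧ crossAt steps j ∧ 0 < sideAt D θ p₀ steps j ∧
    wallRoot D θ steps j = α ∧ wallConst D θ steps j = (k : ℝ)

/-- `(j₀, k₀)` is the `i`-critical data of the walk (for the simple root `α`):
`H_{α+k₀δ}` is the `i`-critical hyperplane (`k₀` maximal such that the walk makes a
negative crossing of `H_{α+k₀δ}`) and `j₀` is the `i`-critical crossing (the first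
negative crossing on that hyperplane). -/
def IsCritical {n : ℕ} (D : RSData V n) (θ p₀ : V) (steps : List (Gen n × Bool))
    (α : V) (j₀ : ℕ) (k₀ : ℤ) : Prop :=
  negCrossOn D θ p₀ steps α k₀ j₀ ∧
    (∀ j k, negCrossOn D θ p₀ steps α k j → k ≤ k₀) ∧
    (∀ j < j₀, ¬ negCrossOn D θ p₀ steps α k₀ j)

/-- A fold on the hyperplane `H_{α+(k₀+1)δ}` (the hyperplane `H_{γ+δ}` of case (a) of
the definition of the root operator) at position `j`. -/
def FoldAbove {n : ℕ} (D : RSData V n) (θ p₀ : V) (steps : List (Gen n × Bool))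
    (α : V) (k₀ : ℤ) (j : ℕ) : Prop :=
  j < steps.length ∧ ¬ crossAt steps j ∧
    wallRoot D θ steps j = α ∧ wallConst D θ steps j = ((k₀ + 1 : ℤ) : ℝ)

/-- A positive crossing of the critical hyperplane `H_{α+k₀δ}` (case (b) of the
definition of the root operator) at position `j`. -/
def PosCrossOn {n : ℕ} (D : RSData V n) (θ p₀ : V) (steps : List (Gen n × Bool))
    (α : V) (k₀ : ℤ) (j : ℕ) : Prop :=
  j < steps.length ∧ crossAt steps j ∧ sideAt D θ p₀ steps j < 0 ∧
    wallRoot D θ steps j = α ∧ wallConst D θ steps j = ((k₀ : ℤ) : ℝ)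

/-- Toggle the step at position `j` between a crossing and a fold. -/
def flipAt {n : ℕ} (steps : List (Gen n × Bool)) (j : ℕ) : List (Gen n × Bool) :=
  steps.set j ((steps.getD j (none, true)).1, !(steps.getD j (none, true)).2)


/-!
The prefixes of an alcove walk act by affine isometries permuting the affine root hyperplanes, so
toggling step `j` composes the rest of the walk with the reflection in the wall met at step `j`;
after toggling the `i`-critical crossing, a later step changes side only if its wall is parallel
to `H_{α_i}`. Until the first interaction the walk stays strictly between `H_{α_i+k₀δ}` and
`H_{α_i+(k₀+1)δ}`: a step through a wall not parallel to them never leaves this strip, since `A₀`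
and each neighbour `s_g A₀` lie between the same hyperplanes `H_{β+kδ}` for every positive root
`β` other than the root of `s_g` (for `s₀` this uses that `θ` is the highest root), and inside the
strip the maximality of `k₀` and positive folding rule out every wall parallel to `H_{α_i}`. So
the first toggle turns the negative crossing into a positive fold and leaves all other steps as
they were; in cases (a) and (b) the second toggle only negates the side at `j₁`, turning a
positive fold into a positive crossing or a positive crossing into a positive fold, and the two
reflections in `H_{α_i+k₀δ}` and `H_{α_i+cδ}` compose to the translation by `(c - k₀) α_i^∨`.
-/

section Reflection

variable {α : V}

lemma inner_coroot'_self (hα : α ≠ 0) : ⟪α, coroot' α⟫ = 2 := by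
  have : ⟪α, α⟫ ≠ 0 := inner_self_ne_zero.mpr hα
  rw [coroot', real_inner_smul_right]
  field_simp

lemma coroot'_neg (α : V) : coroot' (-α) = -coroot' α := by
  simp [coroot']

lemma inner_coroot'_eq (α x : V) : ⟪x, coroot' α⟫ = 2 / ⟪α, α⟫ * ⟪x, α⟫ :=
  real_inner_smul_right _ _ _

lemma sref_eq_aref_zero (α : V) : sref α = aref α 0 := by
  funext x; simp [sref, aref]

lemma aref_eq_sref_sub (α : V) (k : ℝ) (x : V) : aref α k x = sref α x - k • coroot' α := by
  simp only [aref, sref, add_smul]; abel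

lemma sref_eq_sub_inner_coroot' (α x : V) : sref α x = x - ⟪x, coroot' α⟫ • α := by
  simp only [sref, coroot', real_inner_smul_right, smul_smul, mul_comm]

lemma sref_neg_left (α x : V) : sref (-α) x = sref α x := by
  simp [sref, coroot'_neg]

lemma sref_neg_right (α x : V) : sref α (-x) = -sref α x := by
  simp only [sref, inner_neg_left, neg_smul]; abel

lemma sref_self (hα : α ≠ 0) : sref α α = -α := by
  rw [sref_eq_sub_inner_coroot', inner_coroot'_self hα]; module

lemma inner_sref_comm (α x y : V) : ⟪sref α x, y⟫ = ⟪x, sref α y⟫ := by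
  simp only [sref_eq_sub_inner_coroot', inner_sub_left, inner_sub_right, real_inner_smul_left,
    real_inner_smul_right, inner_coroot'_eq, real_inner_comm α]
  ring

lemma inner_aref_left (α : V) (k : ℝ) (x y : V) :
    ⟪aref α k x, y⟫ = ⟪x, y⟫ - (⟪x, α⟫ + k) * ⟪y, coroot' α⟫ := by
  rw [aref, inner_sub_left, real_inner_smul_left, real_inner_comm y (coroot' α)]

lemma inner_aref_self_add (hα : α ≠ 0) (k : ℝ) (x : V) :
    ⟪aref α k x, α⟫ + k = -(⟪x, α⟫ + k) := by
  rw [inner_aref_left, inner_coroot'_self hα]; ring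

lemma aref_aref (hα : α ≠ 0) (a b : ℝ) (x : V) :
    aref α a (aref α b x) = x + (b - a) • coroot' α := by
  rw [aref, show ⟪aref α b x, α⟫ + a = -(⟪x, α⟫ + b) + (a - b) by
    linarith [inner_aref_self_add hα b x]]
  simp only [aref]
  module

lemma aref_aref_self (hα : α ≠ 0) (k : ℝ) (x : V) : aref α k (aref α k x) = x := by
  simp [aref_aref hα]

lemma aref_sub_aref (α : V) (k : ℝ) (x y : V) : aref α k x - aref α k y = sref α (x - y) := by
  simp only [aref, sref, inner_sub_left]; module

def srefEquiv (hα : α ≠ 0) : V ≃ₗᵢ[ℝ] V :=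
  (Module.reflection (f := innerₗ V α) (x := coroot' α) (by
      simpa [real_inner_comm] using inner_coroot'_self hα)).isometryOfInner fun x y => by
    simp only [Module.reflection_apply, innerₗ_apply_apply]
    rw [real_inner_comm x α, real_inner_comm y α]
    change ⟪sref α x, sref α y⟫ = _
    rw [inner_sref_comm, sref_eq_aref_zero, aref_aref_self hα]

@[simp] lemma srefEquiv_apply (hα : α ≠ 0) (x : V) : srefEquiv hα x = sref α x := by
  simp [srefEquiv, Module.reflection_apply, sref, real_inner_comm]

lemma srefEquiv_symm_apply (hα : α ≠ 0) (x : V) : (srefEquiv hα).symm x = sref α x := by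
  rw [LinearIsometryEquiv.symm_apply_eq, srefEquiv_apply, sref_eq_aref_zero, aref_aref_self hα]

end Reflection

namespace RSData

variable {n : ℕ} (D : RSData V n)

def IsRoot (v : V) : Prop := v ∈ D.Rpos ∨ -v ∈ D.Rpos

def IsNonneg (x : V) : Prop := ∃ c : Fin n → ℝ, (∀ i, 0 ≤ c i) ∧ x = ∑ i, c i • D.simple i

def IsHighestRoot (θ : V) : Prop := θ ∈ D.Rpos ∧ ∀ β ∈ D.Rpos, D.IsNonneg (θ - β)

def InFundAlcove (x : V) : Prop := ∀ α ∈ D.Rpos, 0 < ⟪x, α⟫ ∧ ⟪x, α⟫ < 1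

def basis : Module.Basis (Fin n) ℝ V := .mk D.hind D.hspan.ge

variable {D} {α β δ θ p x y : V}

lemma IsRoot.ne_zero (h : D.IsRoot β) : β ≠ 0 := by
  rintro rfl
  rcases h with h | h <;> exact D.hnz _ (by simpa using h) rfl

lemma isRoot_sref (hα : D.IsRoot α) (hβ : D.IsRoot β) : D.IsRoot (sref α β) := by
  have key : ∀ α ∈ D.Rpos, ∀ β, D.IsRoot β → D.IsRoot (sref α β) := by
    rintro α hα β (hβ | hβ)
    · exact D.hrefl α hα β hβ
    · simpa [IsRoot, sref_neg_right, or_comm] using D.hrefl α hα _ hβ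
  rcases hα with hα | hα
  · exact key α hα β hβ
  · rw [← sref_neg_left]; exact key _ hα β hβ

lemma IsRoot.exists_inner_coroot'_eq_int (hα : D.IsRoot α) (hβ : D.IsRoot β) :
    ∃ z : ℤ, ⟪β, coroot' α⟫ = z := by
  have key : ∀ α ∈ D.Rpos, ∃ z : ℤ, ⟪β, coroot' α⟫ = z := by
    intro α hα
    rcases hβ with hβ | hβ
    · exact D.hcrys α hα β hβ
    · obtain ⟨z, hz⟩ := D.hcrys α hα _ hβ
      exact ⟨-z, by rw [inner_neg_left] at hz; push_cast; linarith⟩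
  rcases hα with hα | hα
  · exact key α hα
  · obtain ⟨z, hz⟩ := key _ hα
    exact ⟨-z, by rw [coroot'_neg, inner_neg_right] at hz; push_cast; linarith⟩

lemma basis_apply (i : Fin n) : D.basis i = D.simple i := Module.Basis.mk_apply _ _ _

lemma isNonneg_iff : D.IsNonneg x ↔ ∀ i, 0 ≤ D.basis.repr x i := by
  constructor
  · rintro ⟨c, hc, rfl⟩ i
    simpa only [← basis_apply, D.basis.repr_sum_self] using hc i
  · intro h
    refine ⟨fun i => D.basis.repr x i, h, ?_⟩
    simpa only [← basis_apply] using (D.basis.sum_repr x).symm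

lemma IsNonneg.add (hx : D.IsNonneg x) (hy : D.IsNonneg y) : D.IsNonneg (x + y) := by
  rw [isNonneg_iff] at *
  intro i; simpa using add_nonneg (hx i) (hy i)

lemma IsNonneg.smul (hx : D.IsNonneg x) {a : ℝ} (ha : 0 ≤ a) : D.IsNonneg (a • x) := by
  rw [isNonneg_iff] at *
  intro i; simpa using mul_nonneg ha (hx i)

lemma IsNonneg.eq_zero (hx : D.IsNonneg x) (hnx : D.IsNonneg (-x)) : x = 0 := by
  rw [isNonneg_iff] at hx hnx
  rw [← D.basis.repr.map_eq_zero_iff]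
  ext i; simpa using le_antisymm (by simpa using hnx i) (hx i)

lemma IsNonneg.eq_of_sub (h : D.IsNonneg (x - y)) (h' : D.IsNonneg (y - x)) : x = y :=
  sub_eq_zero.mp (h.eq_zero (by rwa [neg_sub]))

lemma IsNonneg.nonneg_of_smul (hx : D.IsNonneg x) (hx0 : x ≠ 0) {a : ℝ}
    (h : D.IsNonneg (a • x)) : 0 ≤ a := by
  by_contra! ha
  have := h.eq_zero (by simpa [neg_smul] using hx.smul (neg_nonneg.mpr ha.le))
  exact hx0 ((smul_eq_zero.mp this).resolve_left ha.ne)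

lemma isNonneg_of_mem (hβ : β ∈ D.Rpos) : D.IsNonneg β := by
  obtain ⟨c, rfl⟩ := D.hposcomb β hβ
  exact ⟨fun i => c i, fun i => Nat.cast_nonneg _, rfl⟩

lemma exists_repr_pos_of_ne_simple (hβ : β ∈ D.Rpos) {i : Fin n} (hne : β ≠ D.simple i) :
    ∃ j ≠ i, 0 < D.basis.repr β j := by
  by_contra! h
  have hnn := isNonneg_iff.mp (isNonneg_of_mem hβ)
  have hβi : β = D.basis.repr β i • D.simple i := by
    conv_lhs => rw [← D.basis.sum_repr β]
    rw [Finset.sum_eq_single i (fun j _ hj => by simp [le_antisymm (h j hj) (hnn j)])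
      (by simp), basis_apply]
  have h1 := D.hred _ (D.hsimple i) _ (hβi ▸ hβ)
  exact hne (by rw [hβi, h1, one_smul])

/-- `s_i` changes only the `i`-th coordinate, while a positive root other than `α_i` has another
positive coordinate. -/
lemma sref_simple_mem (hβ : β ∈ D.Rpos) {i : Fin n} (hne : β ≠ D.simple i) :
    sref (D.simple i) β ∈ D.Rpos := by
  obtain ⟨j, hji, hj⟩ := exists_repr_pos_of_ne_simple hβ hne
  refine (D.hrefl _ (D.hsimple i) β hβ).resolve_right fun hneg => ?_
  have := isNonneg_iff.mp (isNonneg_of_mem hneg) j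
  rw [sref_eq_sub_inner_coroot', ← basis_apply] at this
  simp [hji.symm] at this
  linarith

lemma sref_simple_mem_iff (hβ : D.IsRoot β) {i : Fin n} (hne : β ≠ D.simple i)
    (hne' : -β ≠ D.simple i) : sref (D.simple i) β ∈ D.Rpos ↔ β ∈ D.Rpos := by
  refine ⟨fun h => hβ.resolve_right fun hneg => ?_, fun h => sref_simple_mem h hne⟩
  have := sref_simple_mem hneg hne'
  rw [sref_neg_right] at this
  exact D.hdisj _ h this


lemma IsHighestRoot.inner_simple_nonneg (hθ : D.IsHighestRoot θ) (i : Fin n) :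
    0 ≤ ⟪θ, D.simple i⟫ := by
  have hα := D.hsimple i
  have hc : D.IsNonneg (⟪θ, coroot' (D.simple i)⟫ • D.simple i) := by
    have hs : θ - sref (D.simple i) θ = ⟪θ, coroot' (D.simple i)⟫ • D.simple i := by
      rw [sref_eq_sub_inner_coroot']; abel
    rcases D.hrefl _ hα θ hθ.1 with h | h
    · rw [← hs]; exact hθ.2 _ h
    · rw [← hs, sub_eq_neg_add]; exact (isNonneg_of_mem h).add (isNonneg_of_mem hθ.1)
  have := (isNonneg_of_mem hα).nonneg_of_smul (D.hnz _ hα) hc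
  rw [inner_coroot'_eq] at this
  exact (mul_nonneg_iff_of_pos_left (div_pos two_pos
    (real_inner_self_pos.mpr (D.hnz _ hα)))).mp this

lemma IsHighestRoot.inner_nonneg (hθ : D.IsHighestRoot θ) (hδ : δ ∈ D.Rpos) : 0 ≤ ⟪δ, θ⟫ := by
  obtain ⟨c, hc, rfl⟩ := isNonneg_of_mem hδ
  rw [sum_inner]
  refine Finset.sum_nonneg fun i _ => ?_
  rw [real_inner_smul_left, real_inner_comm]
  exact mul_nonneg (hc i) (hθ.inner_simple_nonneg i)

lemma IsHighestRoot.inner_coroot'_eq_zero_or_one (hθ : D.IsHighestRoot θ) (hδ : δ ∈ D.Rpos)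
    (hne : δ ≠ θ) :
    ⟪δ, coroot' θ⟫ = 0 ∨ (⟪δ, coroot' θ⟫ = 1 ∧ θ - δ ∈ D.Rpos) := by
  obtain ⟨c, hc⟩ := D.hcrys θ hθ.1 δ hδ
  have hθ0 := D.hnz θ hθ.1
  have hθnn := isNonneg_of_mem hθ.1
  have hc0 : (0 : ℝ) ≤ c := by
    rw [← hc, inner_coroot'_eq]
    exact mul_nonneg (div_nonneg zero_le_two real_inner_self_nonneg) (hθ.inner_nonneg hδ)
  have hs : sref θ δ = δ - (c : ℝ) • θ := by rw [sref_eq_sub_inner_coroot', hc]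
  have hc0' : 0 ≤ c := by exact_mod_cast hc0
  rcases (show c = 0 ∨ 1 ≤ c by omega) with h0 | hc1
  · left; rw [hc, h0, Int.cast_zero]
  have hc1' : (1 : ℝ) ≤ c := by exact_mod_cast hc1
  rcases D.hrefl θ hθ.1 δ hδ with h | h
  · -- `(1 - c) θ = (δ - c θ) + (θ - δ)` lies in the cone, so `c = 1` and `δ = θ`
    exfalso
    have h1 : D.IsNonneg ((1 - c : ℝ) • θ) := by
      convert (isNonneg_of_mem h).add (hθ.2 δ hδ) using 1; rw [hs]; module
    have hc1 : (c : ℝ) = 1 := by linarith [hθnn.nonneg_of_smul hθ0 h1]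
    rw [hs, hc1, one_smul] at h
    exact hne ((isNonneg_of_mem h).eq_of_sub (hθ.2 δ hδ))
  · -- `(2 - c) θ = (θ - (c θ - δ)) + (θ - δ)` lies in the cone, so `c ≤ 2`
    have hs' : -sref θ δ = (c : ℝ) • θ - δ := by rw [hs]; abel
    have h2 : D.IsNonneg ((2 - c : ℝ) • θ) := by
      convert (hθ.2 _ h).add (hθ.2 δ hδ) using 1; rw [hs']; module
    have hc2 : (c : ℝ) ≤ 2 := by linarith [hθnn.nonneg_of_smul hθ0 h2]
    rcases (show c = 1 ∨ c = 2 by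
      have : c ≤ 2 := by exact_mod_cast hc2
      omega) with rfl | rfl
    · right
      refine ⟨by rw [hc, Int.cast_one], ?_⟩
      rwa [hs', Int.cast_one, one_smul] at h
    · exfalso
      have h2' := hθ.2 _ h
      rw [hs', show θ - (((2 : ℤ) : ℝ) • θ - δ) = δ - θ by push_cast; module] at h2'
      exact hne (h2'.eq_of_sub (hθ.2 δ hδ))

lemma genRoot_mem (hθ : θ ∈ D.Rpos) (g : Gen n) : genRoot D θ g ∈ D.Rpos := by
  cases g with
  | none => exact hθ
  | some i => exact D.hsimple i

/-- The alcoves `A₀` and `s_g A₀` are separated by the wall of `s_g` only. -/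
lemma InFundAlcove.inner_sgen_apply_mem (hp : D.InFundAlcove p) (hθ : D.IsHighestRoot θ)
    (g : Gen n) (hδ : δ ∈ D.Rpos) (hne : δ ≠ genRoot D θ g) :
    0 < ⟪sgen D θ g p, δ⟫ ∧ ⟪sgen D θ g p, δ⟫ < 1 := by
  cases g with
  | some i =>
    have : sgen D θ (some i) p = sref (D.simple i) p := by
      simp [sgen, genRoot, genK, sref_eq_aref_zero]
    rw [this, inner_sref_comm]
    exact hp _ (sref_simple_mem hδ hne)
  | none =>
    have hv : ⟪sgen D θ none p, δ⟫ = ⟪p, δ⟫ + (1 - ⟪p, θ⟫) * ⟪δ, coroot' θ⟫ := by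
      simp only [sgen, genRoot, genK, inner_aref_left]; push_cast; ring
    rw [hv]
    rcases hθ.inner_coroot'_eq_zero_or_one hδ hne with h0 | ⟨h1, hmem⟩
    · rw [h0, mul_zero, add_zero]; exact hp δ hδ
    · have := hp _ hmem
      rw [inner_sub_right] at this
      rw [h1]; constructor <;> linarith

lemma InFundAlcove.floor_inner_sgen_apply (hp : D.InFundAlcove p) (hθ : D.IsHighestRoot θ)
    (g : Gen n) (hδ : D.IsRoot δ) (hne : δ ≠ genRoot D θ g) (hne' : -δ ≠ genRoot D θ g) :
    ⌊⟪sgen D θ g p, δ⟫⌋ = ⌊⟪p, δ⟫⌋ := by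
  rcases hδ with hδ | hδ
  · obtain ⟨h1, h1'⟩ := hp.inner_sgen_apply_mem hθ g hδ hne
    obtain ⟨h2, h2'⟩ := hp δ hδ
    rw [Int.floor_eq_zero_iff.mpr ⟨h1.le, h1'⟩, Int.floor_eq_zero_iff.mpr ⟨h2.le, h2'⟩]
  · obtain ⟨h1, h1'⟩ := hp.inner_sgen_apply_mem hθ g hδ hne'
    obtain ⟨h2, h2'⟩ := hp _ hδ
    rw [inner_neg_right] at h1 h1' h2 h2'
    rw [(Int.floor_eq_iff (z := -1)).mpr ⟨by push_cast; linarith, by push_cast; linarith⟩,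
      (Int.floor_eq_iff (z := -1)).mpr ⟨by push_cast; linarith, by push_cast; linarith⟩]

lemma InFundAlcove.abs_inner_genRoot_add_genK_mem_Ioo (hp : D.InFundAlcove p) (hθ : θ ∈ D.Rpos)
    (g : Gen n) :
    |⟪p, genRoot D θ g⟫ + (genK g : ℝ)| ∈ Set.Ioo 0 1 := by
  obtain ⟨h1, h2⟩ := hp _ (genRoot_mem hθ g)
  rw [Set.mem_Ioo, abs_pos, abs_lt]
  cases g <;> simp only [genK, Int.cast_neg, Int.cast_one, Int.cast_zero] <;>
    refine ⟨?_, ?_, ?_⟩ <;> linarith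

end RSData

/-- `w` permutes the affine root hyperplanes `H_{γ+kδ}`. -/
structure IsRootAffine {n : ℕ} (D : RSData V n) (w : V → V) (L : V ≃ₗᵢ[ℝ] V) : Prop where
  apply_eq : ∀ x, w x = L x + w 0
  isRoot_apply : ∀ ⦃γ⦄, D.IsRoot γ → D.IsRoot (L γ)
  isRoot_symm_apply : ∀ ⦃γ⦄, D.IsRoot γ → D.IsRoot (L.symm γ)
  inner_int : ∀ ⦃γ⦄, D.IsRoot γ → ∃ z : ℤ, ⟪w 0, γ⟫ = z

lemma isRootAffine_id {n : ℕ} {D : RSData V n} :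
    IsRootAffine D id (LinearIsometryEquiv.refl ℝ V) where
  apply_eq x := by simp
  isRoot_apply _ h := h
  isRoot_symm_apply _ h := h
  inner_int _ _ := ⟨0, by simp⟩

namespace IsRootAffine

variable {n : ℕ} {D : RSData V n} {w : V → V} {L : V ≃ₗᵢ[ℝ] V}

lemma sub_apply_zero (hw : IsRootAffine D w L) (x : V) : w x - w 0 = L x := by
  rw [hw.apply_eq x]; abel

lemma apply_add (hw : IsRootAffine D w L) (x y : V) : w (x + y) = w x + L y := by
  rw [hw.apply_eq, hw.apply_eq x, map_add]; abel

lemma inner_apply (hw : IsRootAffine D w L) (x γ : V) :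
    ⟪w x, γ⟫ = ⟪x, L.symm γ⟫ + ⟪w 0, γ⟫ := by
  rw [hw.apply_eq, inner_add_left, LinearIsometryEquiv.inner_map_eq_flip]

lemma comp_aref (hw : IsRootAffine D w L) {G : V} (hG : D.IsRoot G) (k : ℤ) :
    IsRootAffine D (w ∘ aref G k) ((srefEquiv hG.ne_zero).trans L) := by
  have h0 : aref G k 0 = -((k : ℝ) • coroot' G) := by simp [aref]
  refine ⟨fun x => ?_, fun γ hγ => ?_, fun γ hγ => ?_, fun γ hγ => ?_⟩
  · rw [Function.comp_apply, Function.comp_apply, hw.apply_eq (aref G k x), h0,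
      hw.apply_eq (-_), LinearIsometryEquiv.trans_apply, srefEquiv_apply, aref_eq_sref_sub,
      map_sub, map_neg]
    abel
  · rw [LinearIsometryEquiv.trans_apply, srefEquiv_apply]
    exact hw.isRoot_apply (RSData.isRoot_sref hG hγ)
  · rw [LinearIsometryEquiv.symm_trans, LinearIsometryEquiv.trans_apply, srefEquiv_symm_apply]
    exact RSData.isRoot_sref hG (hw.isRoot_symm_apply hγ)
  · obtain ⟨z, hz⟩ := hw.inner_int hγ
    obtain ⟨z', hz'⟩ := hG.exists_inner_coroot'_eq_int (hw.isRoot_symm_apply hγ)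
    refine ⟨z - k * z', ?_⟩
    rw [Function.comp_apply, h0, hw.inner_apply, inner_neg_left, real_inner_smul_left,
      real_inner_comm (L.symm γ) (coroot' G), hz', hz]
    push_cast; ring

end IsRootAffine

section Walk

open RSData

variable {n : ℕ} {D : RSData V n} {θ p₀ α : V} {l l' : List (Gen n × Bool)} {j m : ℕ}

lemma foldl_walkMap (l : List (Gen n × Bool)) (g : V → V) :
    l.foldl (fun g s => if s.2 = true then g ∘ sgen D θ s.1 else g) g = g ∘ walkMap D θ l := by
  induction l generalizing g with
  | nil => rfl
  | cons s l ih =>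
    rw [walkMap, List.foldl_cons, List.foldl_cons, ih, ih]
    split_ifs <;> rfl

lemma walkMap_append (l₁ l₂ : List (Gen n × Bool)) :
    walkMap D θ (l₁ ++ l₂) = walkMap D θ l₁ ∘ walkMap D θ l₂ := by
  rw [walkMap, List.foldl_append, foldl_walkMap, ← walkMap]

lemma walkMap_singleton (s : Gen n × Bool) :
    walkMap D θ [s] = if s.2 = true then sgen D θ s.1 else id := by
  rw [walkMap, List.foldl_cons, List.foldl_nil]
  split_ifs <;> rfl

theorem exists_isRootAffine_walkMap (hθ : θ ∈ D.Rpos) (l : List (Gen n × Bool)) :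
    ∃ L, IsRootAffine D (walkMap D θ l) L := by
  suffices ∀ w L, IsRootAffine D w L → ∃ L',
      IsRootAffine D (l.foldl (fun g s => if s.2 = true then g ∘ sgen D θ s.1 else g) w) L' from
    this _ _ isRootAffine_id
  induction l with
  | nil => exact fun w L hw => ⟨L, hw⟩
  | cons s l ih =>
    intro w L hw
    rw [List.foldl_cons]
    split_ifs
    · exact ih _ _ (hw.comp_aref (Or.inl (genRoot_mem hθ s.1)) _)
    · exact ih _ _ hw

lemma wallDir_eq {L : V ≃ₗᵢ[ℝ] V} (hL : IsRootAffine D (walkMap D θ (l.take j)) L) :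
    wallDir D θ l j = L (genRoot D θ (stepGen l j)) :=
  hL.sub_apply_zero _

lemma isRoot_wallDir (hθ : θ ∈ D.Rpos) (l : List (Gen n × Bool)) (j : ℕ) :
    D.IsRoot (wallDir D θ l j) := by
  obtain ⟨L, hL⟩ := exists_isRootAffine_walkMap hθ (l.take j)
  rw [wallDir_eq hL]
  exact hL.isRoot_apply (Or.inl (genRoot_mem hθ _))

lemma wallRoot_mem (hθ : θ ∈ D.Rpos) (l : List (Gen n × Bool)) (j : ℕ) :
    wallRoot D θ l j ∈ D.Rpos := by
  unfold wallRoot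
  split_ifs with h
  · exact h
  · exact (isRoot_wallDir hθ l j).resolve_left h

lemma wallRoot_eq_iff (hα : α ∈ D.Rpos) :
    wallRoot D θ l j = α ↔ wallDir D θ l j = α ∨ -wallDir D θ l j = α := by
  unfold wallRoot
  split_ifs with h
  · refine ⟨Or.inl, fun h' => h'.resolve_right fun hn => D.hdisj α hα ?_⟩
    rwa [← hn, neg_neg]
  · exact ⟨Or.inr, fun h' => h'.resolve_left fun hd => h (hd ▸ hα)⟩

/-- The wall met at step `j` is the image under the prefix `w_j` of the wall of `s_g`. -/
lemma inner_walkMap_take_wallRoot_add_wallConst (hθ : θ ∈ D.Rpos) (l : List (Gen n × Bool))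
    (j : ℕ) (x : V) :
    ⟪walkMap D θ (l.take j) x, wallRoot D θ l j⟫ + wallConst D θ l j =
      if wallDir D θ l j ∈ D.Rpos then ⟪x, genRoot D θ (stepGen l j)⟫ + genK (stepGen l j)
      else -(⟪x, genRoot D θ (stepGen l j)⟫ + genK (stepGen l j)) := by
  obtain ⟨L, hL⟩ := exists_isRootAffine_walkMap hθ (l.take j)
  have hw : ∀ y, ⟪walkMap D θ (l.take j) y, wallDir D θ l j⟫ =
      ⟪y, genRoot D θ (stepGen l j)⟫ + ⟪walkMap D θ (l.take j) 0, wallDir D θ l j⟫ := by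
    intro y
    rw [hL.apply_eq y, inner_add_left, wallDir_eq hL, LinearIsometryEquiv.inner_map_map]
  unfold wallRoot wallConst
  split_ifs
  · rw [hw]; ring
  · rw [inner_neg_right, hw]; ring

lemma sideAt_eq_ite (hθ : θ ∈ D.Rpos) (p₀ : V) (l : List (Gen n × Bool)) (j : ℕ) :
    sideAt D θ p₀ l j =
      if wallDir D θ l j ∈ D.Rpos then ⟪p₀, genRoot D θ (stepGen l j)⟫ + genK (stepGen l j)
      else -(⟪p₀, genRoot D θ (stepGen l j)⟫ + genK (stepGen l j)) :=
  inner_walkMap_take_wallRoot_add_wallConst hθ l j p₀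

lemma RSData.InFundAlcove.abs_sideAt_mem_Ioo (hp₀ : D.InFundAlcove p₀) (hθ : θ ∈ D.Rpos)
    (l : List (Gen n × Bool)) (j : ℕ) : |sideAt D θ p₀ l j| ∈ Set.Ioo 0 1 := by
  rw [sideAt_eq_ite hθ]
  split_ifs
  · exact hp₀.abs_inner_genRoot_add_genK_mem_Ioo hθ _
  · rw [abs_neg]; exact hp₀.abs_inner_genRoot_add_genK_mem_Ioo hθ _

lemma exists_wallConst_eq_int (hθ : θ ∈ D.Rpos) (l : List (Gen n × Bool)) (j : ℕ) :
    ∃ z : ℤ, wallConst D θ l j = z := by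
  obtain ⟨L, hL⟩ := exists_isRootAffine_walkMap hθ (l.take j)
  obtain ⟨z, hz⟩ := hL.inner_int (Or.inl (wallRoot_mem hθ l j))
  have h := inner_walkMap_take_wallRoot_add_wallConst hθ l j 0
  rw [inner_zero_left, zero_add, hz] at h
  split_ifs at h
  · exact ⟨genK (stepGen l j) - z, by push_cast; linarith⟩
  · exact ⟨-genK (stepGen l j) - z, by push_cast; linarith⟩

lemma walkMap_take_sgen (hθ : θ ∈ D.Rpos) (l : List (Gen n × Bool)) (j : ℕ) (x : V) :
    walkMap D θ (l.take j) (sgen D θ (stepGen l j) x) =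
      aref (wallRoot D θ l j) (wallConst D θ l j) (walkMap D θ (l.take j) x) := by
  obtain ⟨L, hL⟩ := exists_isRootAffine_walkMap hθ (l.take j)
  have hcor : coroot' (wallDir D θ l j) = L (coroot' (genRoot D θ (stepGen l j))) := by
    rw [wallDir_eq hL, coroot', coroot', map_smul, LinearIsometryEquiv.inner_map_map]
  rw [sgen, aref, sub_eq_add_neg, hL.apply_add, aref, inner_walkMap_take_wallRoot_add_wallConst hθ,
    ← neg_smul, map_smul]
  unfold wallRoot
  split_ifs
  · rw [hcor]; module
  · simp [coroot'_neg, hcor]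

end Walk

section Flip

open RSData

variable {n : ℕ} {D : RSData V n} {θ p₀ α : V} {l l' : List (Gen n × Bool)} {j j' m : ℕ}

lemma length_flipAt : (flipAt l j).length = l.length := List.length_set

lemma getD_flipAt_of_ne (h : j' ≠ j) (d : Gen n × Bool) :
    (flipAt l j).getD j' d = l.getD j' d := by
  simp [flipAt, List.getD_eq_getElem?_getD, Ne.symm h]

lemma stepGen_flipAt : stepGen (flipAt l j) j' = stepGen l j' := by
  by_cases h : j' = j
  · subst h
    simp only [stepGen, flipAt, List.getD_eq_getElem?_getD, List.getElem?_set_self']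
    cases l[j']? <;> rfl
  · rw [stepGen, getD_flipAt_of_ne h, stepGen]

lemma crossAt_flipAt_of_ne (h : j' ≠ j) : crossAt (flipAt l j) j' ↔ crossAt l j' := by
  rw [crossAt, getD_flipAt_of_ne h, crossAt]

lemma crossAt_flipAt_self (hj : j < l.length) : crossAt (flipAt l j) j ↔ ¬ crossAt l j := by
  simp [crossAt, flipAt, List.getD_eq_getElem?_getD, hj]

lemma take_flipAt_of_le (h : m ≤ j) : (flipAt l j).take m = l.take m := by
  rw [flipAt, List.take_set, List.set_eq_of_length_le (by simp; omega)]

lemma take_flipAt_of_lt (h : j < m) : (flipAt l j).take m = flipAt (l.take m) j := by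
  rw [flipAt, flipAt, List.take_set]
  simp [List.getD_eq_getElem?_getD, h]

lemma flipAt_comm (h : j ≠ j') : flipAt (flipAt l j) j' = flipAt (flipAt l j') j := by
  rw [flipAt, getD_flipAt_of_ne h.symm, flipAt, flipAt, getD_flipAt_of_ne h, flipAt,
    List.set_comm _ _ h.symm]

lemma walkMap_take_succ (hj : j < l.length) :
    walkMap D θ (l.take (j + 1)) =
      walkMap D θ (l.take j) ∘ if crossAt l j then sgen D θ (stepGen l j) else id := by
  rw [List.take_add_one, List.getElem?_eq_getElem hj, Option.toList_some, walkMap_append,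
    walkMap_singleton, crossAt, stepGen, List.getD_eq_getElem _ _ hj]
  by_cases h : l[j].2 = true <;> simp [h]

lemma walkMap_flipAt (hθ : θ ∈ D.Rpos) (hj : j < l.length) :
    walkMap D θ (flipAt l j) = aref (wallRoot D θ l j) (wallConst D θ l j) ∘ walkMap D θ l := by
  have hsplit : ∀ l' : List (Gen n × Bool),
      walkMap D θ l' = walkMap D θ (l'.take (j + 1)) ∘ walkMap D θ (l'.drop (j + 1)) := fun l' => by
    rw [← walkMap_append, List.take_append_drop]
  have hdrop : (flipAt l j).drop (j + 1) = l.drop (j + 1) := by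
    rw [flipAt, List.drop_set_of_lt (by omega)]
  have hlen : j < (flipAt l j).length := by rwa [length_flipAt]
  rw [hsplit (flipAt l j), hsplit l, hdrop, walkMap_take_succ hlen, walkMap_take_succ hj,
    take_flipAt_of_le le_rfl, stepGen_flipAt]
  funext x
  by_cases hc : crossAt l j
  · simp [(crossAt_flipAt_self hj).not.mpr (not_not.mpr hc), hc, walkMap_take_sgen hθ,
      aref_aref_self (D.hnz _ (wallRoot_mem hθ l j))]
  · simp [(crossAt_flipAt_self hj).mpr hc, hc, walkMap_take_sgen hθ]

lemma wallDir_congr (hg : stepGen l' j = stepGen l j)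
    (hw : walkMap D θ (l'.take j) = walkMap D θ (l.take j)) :
    wallDir D θ l' j = wallDir D θ l j := by
  rw [wallDir, wallDir, hg, hw]

lemma wallRoot_congr (hg : stepGen l' j = stepGen l j)
    (hw : walkMap D θ (l'.take j) = walkMap D θ (l.take j)) :
    wallRoot D θ l' j = wallRoot D θ l j := by
  rw [wallRoot, wallRoot, wallDir_congr hg hw]

lemma wallConst_congr (hg : stepGen l' j = stepGen l j)
    (hw : walkMap D θ (l'.take j) = walkMap D θ (l.take j)) :
    wallConst D θ l' j = wallConst D θ l j := by
  rw [wallConst, wallConst, wallDir_congr hg hw, hg, hw]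

lemma sideAt_congr (hg : stepGen l' j = stepGen l j)
    (hw : walkMap D θ (l'.take j) = walkMap D θ (l.take j)) :
    sideAt D θ p₀ l' j = sideAt D θ p₀ l j := by
  rw [sideAt, sideAt, wallRoot_congr hg hw, wallConst_congr hg hw, hw]

lemma sideAt_flipAt_of_le (h : j ≤ m) : sideAt D θ p₀ (flipAt l m) j = sideAt D θ p₀ l j :=
  sideAt_congr stepGen_flipAt (by rw [take_flipAt_of_le h])

lemma walkMap_take_flipAt (hθ : θ ∈ D.Rpos) (hj : j < l.length) (hm : j < m) :
    walkMap D θ ((flipAt l j).take m) =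
      aref (wallRoot D θ l j) (wallConst D θ l j) ∘ walkMap D θ (l.take m) := by
  have hw : walkMap D θ ((l.take m).take j) = walkMap D θ (l.take j) := by
    rw [List.take_take, min_eq_left hm.le]
  have hg : stepGen (l.take m) j = stepGen l j := by
    simp [stepGen, List.getD_eq_getElem?_getD, hm]
  rw [take_flipAt_of_lt hm, walkMap_flipAt hθ (by simp; omega), wallRoot_congr hg hw,
    wallConst_congr hg hw]

end Flip

section Transport

open RSData

variable {n : ℕ} {D : RSData V n} {θ p₀ α : V} {l l' : List (Gen n × Bool)} {j : ℕ}

lemma sideAt_eq_of_wallDir_mem_iff (hθ : θ ∈ D.Rpos) (hg : stepGen l' j = stepGen l j)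
    (h : wallDir D θ l' j ∈ D.Rpos ↔ wallDir D θ l j ∈ D.Rpos) :
    sideAt D θ p₀ l' j = sideAt D θ p₀ l j := by
  rw [sideAt_eq_ite hθ, sideAt_eq_ite hθ, hg]
  by_cases hd : wallDir D θ l j ∈ D.Rpos <;> simp [hd, h]

lemma sideAt_eq_neg_of_wallDir_mem_iff (hθ : θ ∈ D.Rpos) (hg : stepGen l' j = stepGen l j)
    (h : wallDir D θ l' j ∈ D.Rpos ↔ wallDir D θ l j ∉ D.Rpos) :
    sideAt D θ p₀ l' j = -sideAt D θ p₀ l j := by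
  rw [sideAt_eq_ite hθ, sideAt_eq_ite hθ, hg]
  by_cases hd : wallDir D θ l j ∈ D.Rpos <;> simp [hd, h]

lemma sideAt_of_walkMap_take_eq_add (hθ : θ ∈ D.Rpos) (hg : stepGen l' j = stepGen l j) (c : V)
    (hw : ∀ x, walkMap D θ (l'.take j) x = walkMap D θ (l.take j) x + c) :
    sideAt D θ p₀ l' j = sideAt D θ p₀ l j :=
  sideAt_eq_of_wallDir_mem_iff hθ hg <| by
    rw [wallDir, wallDir, hw, hw, hg, add_sub_add_right_eq_sub]

lemma wallDir_of_walkMap_take_eq_aref (hg : stepGen l' j = stepGen l j) {c : ℝ}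
    (hw : walkMap D θ (l'.take j) = aref α c ∘ walkMap D θ (l.take j)) :
    wallDir D θ l' j = sref α (wallDir D θ l j) := by
  rw [wallDir, wallDir, hg, hw]
  exact aref_sub_aref _ _ _ _

lemma sideAt_of_walkMap_take_eq_aref_of_ne (hθ : θ ∈ D.Rpos) (hg : stepGen l' j = stepGen l j)
    {i : Fin n} {c : ℝ}
    (hw : walkMap D θ (l'.take j) = aref (D.simple i) c ∘ walkMap D θ (l.take j))
    (hne : wallRoot D θ l j ≠ D.simple i) :
    sideAt D θ p₀ l' j = sideAt D θ p₀ l j := by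
  refine sideAt_eq_of_wallDir_mem_iff hθ hg ?_
  rw [wallDir_of_walkMap_take_eq_aref hg hw]
  have h := (wallRoot_eq_iff (D.hsimple i)).not.mp hne
  push Not at h
  exact sref_simple_mem_iff (isRoot_wallDir hθ l j) h.1 h.2

lemma sideAt_of_walkMap_take_eq_aref_of_eq (hθ : θ ∈ D.Rpos) (hg : stepGen l' j = stepGen l j)
    {i : Fin n} {c : ℝ}
    (hw : walkMap D θ (l'.take j) = aref (D.simple i) c ∘ walkMap D θ (l.take j))
    (heq : wallRoot D θ l j = D.simple i) :
    sideAt D θ p₀ l' j = -sideAt D θ p₀ l j := by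
  have hα := D.hsimple i
  refine sideAt_eq_neg_of_wallDir_mem_iff hθ hg ?_
  rw [wallDir_of_walkMap_take_eq_aref hg hw]
  rcases (wallRoot_eq_iff hα).mp heq with h | h
  · rw [h, sref_self (D.hnz _ hα)]
    exact iff_of_false (D.hdisj _ hα) (not_not.mpr hα)
  · rw [← neg_eq_iff_eq_neg.mpr h.symm, sref_neg_right, sref_self (D.hnz _ hα), neg_neg]
    exact iff_of_true hα (D.hdisj _ hα)

lemma floor_inner_walkMap_take_succ (hθ : D.IsHighestRoot θ) (hp₀ : D.InFundAlcove p₀)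
    (hα : α ∈ D.Rpos) (hj : j < l.length) (hne : wallRoot D θ l j ≠ α) :
    ⌊⟪walkMap D θ (l.take (j + 1)) p₀, α⟫⌋ = ⌊⟪walkMap D θ (l.take j) p₀, α⟫⌋ := by
  rw [walkMap_take_succ hj]
  split_ifs
  swap
  · rfl
  obtain ⟨L, hL⟩ := exists_isRootAffine_walkMap hθ.1 (l.take j)
  obtain ⟨z, hz⟩ := hL.inner_int (Or.inl hα)
  have hdir := (wallRoot_eq_iff hα).not.mp hne
  push Not at hdir
  rw [wallDir_eq hL] at hdir
  have h1 : L.symm α ≠ genRoot D θ (stepGen l j) := fun h =>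
    hdir.1 (by rw [← h, L.apply_symm_apply])
  have h2 : -L.symm α ≠ genRoot D θ (stepGen l j) := fun h =>
    hdir.2 (by rw [← h, map_neg, L.apply_symm_apply, neg_neg])
  rw [Function.comp_apply, hL.inner_apply (sgen _ _ _ _), hL.inner_apply p₀, hz,
    Int.floor_add_intCast, Int.floor_add_intCast,
    hp₀.floor_inner_sgen_apply hθ _ (hL.isRoot_symm_apply (Or.inl hα)) h1 h2]

end Transport

section Strip

open RSData

variable {n : ℕ} {D : RSData V n} {θ p₀ α : V} {steps : List (Gen n × Bool)} {j₀ J : ℕ}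
  {k₀ : ℤ}

def NoInteractionBetween (D : RSData V n) (θ p₀ : V) (steps : List (Gen n × Bool)) (α : V)
    (k₀ : ℤ) (j₀ J : ℕ) : Prop :=
  ∀ j, j₀ < j → j < J → ¬ (FoldAbove D θ p₀ steps α k₀ j ∨ PosCrossOn D θ p₀ steps α k₀ j)

/-- Between `H_{α+k₀δ}` and `H_{α+(k₀+1)δ}` the only walls parallel to `H_α` are these two,
and each way of meeting them is excluded: a fold on the lower one is negative, a crossing of the
upper one contradicts the maximality of `k₀`, the other two are interactions. -/
lemma wallRoot_ne_of_floor_eq (hθ : θ ∈ D.Rpos) (hp₀ : D.InFundAlcove p₀)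
    (hpf : PosFolded D θ p₀ steps) (hmax : ∀ j k, negCrossOn D θ p₀ steps α k j → k ≤ k₀)
    {j : ℕ} (hj : j < steps.length)
    (hno : ¬ (FoldAbove D θ p₀ steps α k₀ j ∨ PosCrossOn D θ p₀ steps α k₀ j))
    (hfl : ⌊⟪walkMap D θ (steps.take j) p₀, α⟫⌋ = -k₀ - 1) : wallRoot D θ steps j ≠ α := by
  intro hroot
  obtain ⟨c, hc⟩ := exists_wallConst_eq_int hθ steps j
  have hside : sideAt D θ p₀ steps j = ⟪walkMap D θ (steps.take j) p₀, α⟫ + c := by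
    rw [sideAt, hroot, hc]
  obtain ⟨hpos, hlt⟩ := hp₀.abs_sideAt_mem_Ioo hθ steps j
  rw [abs_pos, hside] at hpos
  rw [abs_lt, hside] at hlt
  obtain ⟨hfl₁, hfl₂⟩ := Int.floor_eq_iff.mp hfl
  push_cast at hfl₁ hfl₂
  have hc₁ : -1 < c - k₀ := by
    have : (-1 : ℝ) < ((c - k₀ : ℤ) : ℝ) := by push_cast; linarith
    exact_mod_cast this
  have hc₂ : c - k₀ < 2 := by
    have : ((c - k₀ : ℤ) : ℝ) < 2 := by push_cast; linarith
    exact_mod_cast this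
  rcases (show c = k₀ ∨ c = k₀ + 1 by omega) with rfl | rfl
  · by_cases hcr : crossAt steps j
    · exact hno (Or.inr ⟨hj, hcr, by rw [hside]; linarith, hroot, hc⟩)
    · have := hpf j hj hcr
      rw [hside] at this
      linarith
  · by_cases hcr : crossAt steps j
    · have hpos' : 0 < sideAt D θ p₀ steps j := by
        rw [hside]; push_cast at hpos ⊢; exact lt_of_le_of_ne (by linarith) (Ne.symm hpos)
      have := hmax j _ ⟨hj, hcr, hpos', hroot, hc⟩
      omega
    · exact hno (Or.inl ⟨hj, hcr, hroot, hc⟩)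

lemma floor_inner_walkMap_take_of_noInteraction (hθ : D.IsHighestRoot θ)
    (hp₀ : D.InFundAlcove p₀) (hpf : PosFolded D θ p₀ steps) (hα : α ∈ D.Rpos)
    (hcrit : IsCritical D θ p₀ steps α j₀ k₀) (hJ : J ≤ steps.length)
    (hno : NoInteractionBetween D θ p₀ steps α k₀ j₀ J) {j : ℕ} (hj₀ : j₀ < j) (hjJ : j ≤ J) :
    ⌊⟪walkMap D θ (steps.take j) p₀, α⟫⌋ = -k₀ - 1 := by
  obtain ⟨⟨hj₀len, hc₀, hs₀, hr₀, hk₀⟩, hmax, -⟩ := hcrit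
  induction j, hj₀ using Nat.le_induction with
  | base =>
    obtain ⟨-, hlt⟩ := hp₀.abs_sideAt_mem_Ioo hθ.1 steps j₀
    rw [abs_lt, sideAt, hr₀, hk₀] at hlt
    rw [sideAt, hr₀, hk₀] at hs₀
    have := inner_aref_self_add (D.hnz α hα) k₀ (walkMap D θ (steps.take j₀) p₀)
    rw [walkMap_take_succ hj₀len, if_pos hc₀, Function.comp_apply, walkMap_take_sgen hθ.1, hr₀,
      hk₀, Int.floor_eq_iff]
    push_cast
    constructor <;> linarith
  | succ j hj ih =>
    have hjJ' : j < J := by omega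
    rw [← ih hjJ'.le]
    exact floor_inner_walkMap_take_succ hθ hp₀ hα (by omega)
      (wallRoot_ne_of_floor_eq hθ.1 hp₀ hpf hmax (by omega) (hno j hj hjJ') (ih hjJ'.le))

lemma wallRoot_ne_of_noInteraction (hθ : D.IsHighestRoot θ) (hp₀ : D.InFundAlcove p₀)
    (hpf : PosFolded D θ p₀ steps) (hα : α ∈ D.Rpos) (hcrit : IsCritical D θ p₀ steps α j₀ k₀)
    (hJ : J ≤ steps.length) (hno : NoInteractionBetween D θ p₀ steps α k₀ j₀ J) {j : ℕ}
    (hj₀ : j₀ < j) (hjJ : j < J) : wallRoot D θ steps j ≠ α :=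
  wallRoot_ne_of_floor_eq hθ.1 hp₀ hpf hcrit.2.1 (by omega) (hno j hj₀ hjJ)
    (floor_inner_walkMap_take_of_noInteraction hθ hp₀ hpf hα hcrit hJ hno hj₀ hjJ.le)

end Strip

section RootOperator

open RSData

variable {n : ℕ} {D : RSData V n} {θ p₀ α : V} {l l' steps : List (Gen n × Bool)} {i : Fin n}
  {j₀ j₁ J m : ℕ} {k₀ : ℤ}

lemma walkDim_eq_card (l : List (Gen n × Bool)) :
    walkDim D θ p₀ l =
      ((Finset.range l.length).filter fun j => crossAt l j → sideAt D θ p₀ l j < 0).card := by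
  rw [walkDim, numPosCross, numFolds, ← Finset.card_union_of_disjoint
    (Finset.disjoint_filter.mpr fun _ _ h h' => h' h.1), ← Finset.filter_or]
  congr 1
  ext j
  simp only [Finset.mem_filter]
  tauto

/-- `j₁ = j₀` is allowed, for case (c), where a single step is toggled. -/
lemma posFolded_and_walkDim_of_agree (hpf : PosFolded D θ p₀ l) (hlen : l'.length = l.length)
    (hj₀ : j₀ < l.length)
    (hagree : ∀ j < l.length, j ≠ j₀ → j ≠ j₁ →
      (crossAt l' j ↔ crossAt l j) ∧ sideAt D θ p₀ l' j = sideAt D θ p₀ l j)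
    (hold₀ : crossAt l j₀ ∧ 0 < sideAt D θ p₀ l j₀)
    (hnew₀ : ¬ crossAt l' j₀ ∧ 0 < sideAt D θ p₀ l' j₀)
    (h₁ : j₁ ≠ j₀ → (crossAt l j₁ → sideAt D θ p₀ l j₁ < 0) ∧
      (crossAt l' j₁ → sideAt D θ p₀ l' j₁ < 0) ∧ (¬ crossAt l' j₁ → 0 < sideAt D θ p₀ l' j₁)) :
    PosFolded D θ p₀ l' ∧ walkDim D θ p₀ l' = walkDim D θ p₀ l + 1 := by
  constructor
  · intro j hj hnc
    rw [hlen] at hj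
    by_cases h0 : j = j₀
    · exact h0 ▸ hnew₀.2
    by_cases h1 : j = j₁
    · subst h1; exact (h₁ h0).2.2 hnc
    obtain ⟨hc, hs⟩ := hagree j hj h0 h1
    rw [hs]
    exact hpf j hj (hc.not.mp hnc)
  · have hnot : j₀ ∉ (Finset.range l.length).filter
        fun j => crossAt l j → sideAt D θ p₀ l j < 0 := by
      simp only [Finset.mem_filter, not_and]
      exact fun _ himp => lt_asymm hold₀.2 (himp hold₀.1)
    rw [walkDim_eq_card, walkDim_eq_card, hlen, ← Finset.card_insert_of_notMem hnot]
    congr 1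
    ext j
    simp only [Finset.mem_insert, Finset.mem_filter, Finset.mem_range]
    by_cases h0 : j = j₀
    · subst h0; simp [hj₀, hnew₀.1]
    by_cases h1 : j = j₁
    · subst h1
      simp only [h0, false_or]
      exact and_congr_right fun _ => iff_of_true (h₁ h0).2.1 (h₁ h0).1
    by_cases hj : j < l.length
    · obtain ⟨hc, hs⟩ := hagree j hj h0 h1
      simp [h0, hj, hc, hs]
    · simp [h0, hj]

lemma walkMap_take_flipAt_of_isCritical (hθ : θ ∈ D.Rpos)
    (hcrit : IsCritical D θ p₀ steps α j₀ k₀) (hm : j₀ < m) :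
    walkMap D θ ((flipAt steps j₀).take m) = aref α k₀ ∘ walkMap D θ (steps.take m) := by
  obtain ⟨⟨hj₀, -, -, hr₀, hk₀⟩, -⟩ := hcrit
  rw [walkMap_take_flipAt hθ hj₀ hm, hr₀, hk₀]

/-- Before the first interaction the walk meets no wall parallel to `H_α`, and `s_α` preserves
the sign of every other root. -/
lemma sideAt_flipAt_of_noInteraction (hθ : D.IsHighestRoot θ) (hp₀ : D.InFundAlcove p₀)
    (hpf : PosFolded D θ p₀ steps) (hcrit : IsCritical D θ p₀ steps (D.simple i) j₀ k₀)
    (hJ : J ≤ steps.length) (hno : NoInteractionBetween D θ p₀ steps (D.simple i) k₀ j₀ J)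
    {j : ℕ} (hj : j < J) : sideAt D θ p₀ (flipAt steps j₀) j = sideAt D θ p₀ steps j := by
  rcases le_or_gt j j₀ with h | h
  · exact sideAt_flipAt_of_le h
  · exact sideAt_of_walkMap_take_eq_aref_of_ne hθ.1 stepGen_flipAt
      (walkMap_take_flipAt_of_isCritical hθ.1 hcrit h)
      (wallRoot_ne_of_noInteraction hθ hp₀ hpf (D.hsimple i) hcrit hJ hno h hj)

lemma walkMap_take_flipAt_flipAt (hθ : θ ∈ D.Rpos) (h : j₀ < j₁) (hj₁ : j₁ < l.length)
    (hm : j₁ < m) :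
    walkMap D θ ((flipAt (flipAt l j₀) j₁).take m) =
      aref (wallRoot D θ l j₀) (wallConst D θ l j₀) ∘
        aref (wallRoot D θ l j₁) (wallConst D θ l j₁) ∘ walkMap D θ (l.take m) := by
  have hw : walkMap D θ ((flipAt l j₁).take j₀) = walkMap D θ (l.take j₀) := by
    rw [take_flipAt_of_le h.le]
  rw [flipAt_comm h.ne, walkMap_take_flipAt hθ (by rw [length_flipAt]; omega) (by omega),
    wallRoot_congr stepGen_flipAt hw, wallConst_congr stepGen_flipAt hw,
    walkMap_take_flipAt hθ hj₁ hm]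

lemma crossAt_flipAt_flipAt_of_ne {j : ℕ} (h₀ : j ≠ j₀) (h₁ : j ≠ j₁) :
    crossAt (flipAt (flipAt l j₀) j₁) j ↔ crossAt l j := by
  rw [crossAt_flipAt_of_ne h₁, crossAt_flipAt_of_ne h₀]

lemma crossAt_flipAt_flipAt_left (h : j₀ < j₁) (hj₀ : j₀ < l.length) :
    crossAt (flipAt (flipAt l j₀) j₁) j₀ ↔ ¬ crossAt l j₀ := by
  rw [crossAt_flipAt_of_ne h.ne, crossAt_flipAt_self hj₀]

lemma crossAt_flipAt_flipAt_right (h : j₀ < j₁) (hj₁ : j₁ < l.length) :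
    crossAt (flipAt (flipAt l j₀) j₁) j₁ ↔ ¬ crossAt l j₁ := by
  rw [crossAt_flipAt_self (by rwa [length_flipAt]), crossAt_flipAt_of_ne h.ne']

lemma flipAt_flipAt_of_noInteraction (hθ : D.IsHighestRoot θ) (hp₀ : D.InFundAlcove p₀)
    (hpf : PosFolded D θ p₀ steps) (hcrit : IsCritical D θ p₀ steps (D.simple i) j₀ k₀)
    (h : j₀ < j₁) (hj₁ : j₁ < steps.length)
    (hno : NoInteractionBetween D θ p₀ steps (D.simple i) k₀ j₀ j₁)
    (hr₁ : wallRoot D θ steps j₁ = D.simple i) :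
    (∀ j < steps.length, j ≠ j₁ →
      sideAt D θ p₀ (flipAt (flipAt steps j₀) j₁) j = sideAt D θ p₀ steps j) ∧
    sideAt D θ p₀ (flipAt (flipAt steps j₀) j₁) j₁ = -sideAt D θ p₀ steps j₁ ∧
    ∀ x, walkMap D θ (flipAt (flipAt steps j₀) j₁) x =
      walkMap D θ steps x + (wallConst D θ steps j₁ - k₀) • coroot' (D.simple i) := by
  obtain ⟨-, -, -, hr₀, hk₀⟩ := hcrit.1
  have htail : ∀ m, j₁ < m → ∀ x, walkMap D θ ((flipAt (flipAt steps j₀) j₁).take m) x =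
      walkMap D θ (steps.take m) x + (wallConst D θ steps j₁ - k₀) • coroot' (D.simple i) := by
    intro m hm x
    rw [walkMap_take_flipAt_flipAt hθ.1 h hj₁ hm, hr₀, hk₀, hr₁]
    exact aref_aref (D.hnz _ (D.hsimple i)) _ _ _
  refine ⟨fun j hj hne => ?_, ?_, fun x => ?_⟩
  · rcases lt_or_gt_of_ne hne with hlt | hgt
    · rw [sideAt_flipAt_of_le hlt.le]
      exact sideAt_flipAt_of_noInteraction hθ hp₀ hpf hcrit hj₁.le hno hlt
    · exact sideAt_of_walkMap_take_eq_add hθ.1 (by rw [stepGen_flipAt, stepGen_flipAt]) _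
        (htail j hgt)
  · rw [sideAt_flipAt_of_le le_rfl]
    exact sideAt_of_walkMap_take_eq_aref_of_eq hθ.1 stepGen_flipAt
      (walkMap_take_flipAt_of_isCritical hθ.1 hcrit h) hr₁
  · have := htail steps.length hj₁ x
    rwa [List.take_length, List.take_of_length_le (by simp [length_flipAt])] at this

theorem rootOperator_case_a (hθ : D.IsHighestRoot θ) (hp₀ : D.InFundAlcove p₀)
    (hpf : PosFolded D θ p₀ steps) (hcrit : IsCritical D θ p₀ steps (D.simple i) j₀ k₀)
    (h : j₀ < j₁) (hfold : FoldAbove D θ p₀ steps (D.simple i) k₀ j₁)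
    (hno : NoInteractionBetween D θ p₀ steps (D.simple i) k₀ j₀ j₁) :
    PosFolded D θ p₀ (flipAt (flipAt steps j₀) j₁) ∧
      walkDim D θ p₀ (flipAt (flipAt steps j₀) j₁) = walkDim D θ p₀ steps + 1 ∧
      ∀ x, walkMap D θ (flipAt (flipAt steps j₀) j₁) x
        = walkMap D θ steps x + coroot' (D.simple i) := by
  obtain ⟨hj₁, hnc₁, hr₁, hk₁⟩ := hfold
  obtain ⟨hj₀, hc₀, hs₀, -⟩ := hcrit.1
  obtain ⟨hsides, hside₁, hend⟩ := flipAt_flipAt_of_noInteraction hθ hp₀ hpf hcrit h hj₁ hno hr₁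
  have hpos₁ := hpf j₁ hj₁ hnc₁
  have hcr₁ := (crossAt_flipAt_flipAt_right h hj₁).mpr hnc₁
  obtain ⟨hpf', hdim⟩ := posFolded_and_walkDim_of_agree hpf (by simp [length_flipAt]) hj₀
    (fun j hj h0 h1 => ⟨crossAt_flipAt_flipAt_of_ne h0 h1, hsides j hj h1⟩) ⟨hc₀, hs₀⟩
    ⟨(crossAt_flipAt_flipAt_left h hj₀).not.mpr (not_not.mpr hc₀), hsides j₀ hj₀ h.ne ▸ hs₀⟩
    (fun _ => ⟨fun hc => absurd hc hnc₁, fun _ => by linarith, fun hnc => absurd hcr₁ hnc⟩)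
  refine ⟨hpf', hdim, fun x => ?_⟩
  rw [hend, hk₁]
  push_cast
  simp

theorem rootOperator_case_b (hθ : D.IsHighestRoot θ) (hp₀ : D.InFundAlcove p₀)
    (hpf : PosFolded D θ p₀ steps) (hcrit : IsCritical D θ p₀ steps (D.simple i) j₀ k₀)
    (h : j₀ < j₁) (hposc : PosCrossOn D θ p₀ steps (D.simple i) k₀ j₁)
    (hno : NoInteractionBetween D θ p₀ steps (D.simple i) k₀ j₀ j₁) :
    PosFolded D θ p₀ (flipAt (flipAt steps j₀) j₁) ∧
      walkDim D θ p₀ (flipAt (flipAt steps j₀) j₁) = walkDim D θ p₀ steps + 1 ∧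
      ∀ x, walkMap D θ (flipAt (flipAt steps j₀) j₁) x = walkMap D θ steps x := by
  obtain ⟨hj₁, hc₁, hs₁, hr₁, hk₁⟩ := hposc
  obtain ⟨hj₀, hc₀, hs₀, -⟩ := hcrit.1
  obtain ⟨hsides, hside₁, hend⟩ := flipAt_flipAt_of_noInteraction hθ hp₀ hpf hcrit h hj₁ hno hr₁
  have hnc₁ := (crossAt_flipAt_flipAt_right h hj₁).not.mpr (not_not.mpr hc₁)
  obtain ⟨hpf', hdim⟩ := posFolded_and_walkDim_of_agree hpf (by simp [length_flipAt]) hj₀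
    (fun j hj h0 h1 => ⟨crossAt_flipAt_flipAt_of_ne h0 h1, hsides j hj h1⟩) ⟨hc₀, hs₀⟩
    ⟨(crossAt_flipAt_flipAt_left h hj₀).not.mpr (not_not.mpr hc₀), hsides j₀ hj₀ h.ne ▸ hs₀⟩
    (fun _ => ⟨fun _ => hs₁, fun hc => absurd hc hnc₁, fun _ => by linarith⟩)
  refine ⟨hpf', hdim, fun x => ?_⟩
  rw [hend, hk₁, sub_self, zero_smul, add_zero]

theorem rootOperator_case_c (hθ : D.IsHighestRoot θ) (hp₀ : D.InFundAlcove p₀)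
    (hpf : PosFolded D θ p₀ steps) (hcrit : IsCritical D θ p₀ steps (D.simple i) j₀ k₀)
    (hno : NoInteractionBetween D θ p₀ steps (D.simple i) k₀ j₀ steps.length) :
    PosFolded D θ p₀ (flipAt steps j₀) ∧
      walkDim D θ p₀ (flipAt steps j₀) = walkDim D θ p₀ steps + 1 ∧
      ∀ x, walkMap D θ (flipAt steps j₀) x
        = aref (D.simple i) ((k₀ : ℤ) : ℝ) (walkMap D θ steps x) := by
  obtain ⟨hj₀, hc₀, hs₀, hr₀, hk₀⟩ := hcrit.1
  have hsides : ∀ j < steps.length, sideAt D θ p₀ (flipAt steps j₀) j = sideAt D θ p₀ steps j :=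
    fun j hj => sideAt_flipAt_of_noInteraction hθ hp₀ hpf hcrit le_rfl hno hj
  obtain ⟨hpf', hdim⟩ := posFolded_and_walkDim_of_agree (j₁ := j₀) hpf length_flipAt hj₀
    (fun j hj h0 _ => ⟨crossAt_flipAt_of_ne h0, hsides j hj⟩) ⟨hc₀, hs₀⟩
    ⟨(crossAt_flipAt_self hj₀).not.mpr (not_not.mpr hc₀), hsides j₀ hj₀ ▸ hs₀⟩
    (fun h => absurd rfl h)
  refine ⟨hpf', hdim, fun x => ?_⟩
  rw [walkMap_flipAt hθ.1 hj₀, hr₀, hk₀]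
  rfl

end RootOperator

/-- If `p` is a positively folded alcove walk and the raising root
operator `ẽ_i` applied to `p` is nonzero (i.e. `p` has an `i`-critical crossing, at
position `j₀`, on the `i`-critical hyperplane `H_{α_i+k₀δ}`), then `ẽ_i(p)` is again
positively folded and `dim(ẽ_i(p)) = dim(p) + 1`; moreover `end(ẽ_i(p))` equals
`t_{α_i^∨}·end(p)`, `end(p)`, or `s_γ·end(p)` according to whether `ẽ_i` acts by case
(a) (the first later interaction with the strip is a fold on `H_{γ+δ}`), case (b) (it is
a positive crossing of `H_γ`), or case (c) (there is no later interaction).  In cases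
(a) and (b) the operator toggles positions `j₀` and `j₁`; in case (c) it toggles `j₀`. -/
theorem root_operator_properties {n : ℕ} (D : RSData V n) (θ : V)
    (hθ : θ ∈ D.Rpos)
    (hθhigh : ∀ β ∈ D.Rpos, ∃ c : Fin n → ℝ, (∀ i, 0 ≤ c i) ∧
      θ - β = ∑ i, c i • D.simple i)
    (p₀ : V) (hp₀ : ∀ α ∈ D.Rpos, 0 < ⟪p₀, α⟫ ∧ ⟪p₀, α⟫ < 1)
    (steps : List (Gen n × Bool)) (hpf : PosFolded D θ p₀ steps)
    (i : Fin n) (j₀ : ℕ) (k₀ : ℤ)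
    (hcrit : IsCritical D θ p₀ steps (D.simple i) j₀ k₀) :
    -- case (a)
    (∀ j₁, j₀ < j₁ → FoldAbove D θ p₀ steps (D.simple i) k₀ j₁ →
      (∀ j, j₀ < j → j < j₁ → ¬ (FoldAbove D θ p₀ steps (D.simple i) k₀ j ∨
        PosCrossOn D θ p₀ steps (D.simple i) k₀ j)) →
      (PosFolded D θ p₀ (flipAt (flipAt steps j₀) j₁) ∧
        walkDim D θ p₀ (flipAt (flipAt steps j₀) j₁) = walkDim D θ p₀ steps + 1 ∧
        ∀ x, walkMap D θ (flipAt (flipAt steps j₀) j₁) x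
            = walkMap D θ steps x + coroot' (D.simple i))) ∧
    -- case (b)
    (∀ j₁, j₀ < j₁ → PosCrossOn D θ p₀ steps (D.simple i) k₀ j₁ →
      (∀ j, j₀ < j → j < j₁ → ¬ (FoldAbove D θ p₀ steps (D.simple i) k₀ j ∨
        PosCrossOn D θ p₀ steps (D.simple i) k₀ j)) →
      (PosFolded D θ p₀ (flipAt (flipAt steps j₀) j₁) ∧
        walkDim D θ p₀ (flipAt (flipAt steps j₀) j₁) = walkDim D θ p₀ steps + 1 ∧
        ∀ x, walkMap D θ (flipAt (flipAt steps j₀) j₁) x = walkMap D θ steps x)) ∧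
    -- case (c)
    ((∀ j, j₀ < j → ¬ (FoldAbove D θ p₀ steps (D.simple i) k₀ j ∨
        PosCrossOn D θ p₀ steps (D.simple i) k₀ j)) →
      (PosFolded D θ p₀ (flipAt steps j₀) ∧
        walkDim D θ p₀ (flipAt steps j₀) = walkDim D θ p₀ steps + 1 ∧
        ∀ x, walkMap D θ (flipAt steps j₀) x
            = aref (D.simple i) ((k₀ : ℤ) : ℝ) (walkMap D θ steps x))) := by
  have hθ' : D.IsHighestRoot θ := ⟨hθ, hθhigh⟩
  exact ⟨fun j₁ h hfold hno => rootOperator_case_a hθ' hp₀ hpf hcrit h hfold hno,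
    fun j₁ h hposc hno => rootOperator_case_b hθ' hp₀ hpf hcrit h hposc hno,
    fun hno => rootOperator_case_c hθ' hp₀ hpf hcrit fun j h _ => hno j h⟩
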